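/- arXiv:1108.2848 — 3 statements merged into one kernel-verified Lean document; each statement's English description precedes it below -/
import Mathlib

section
/- For every two elements α, β of I∞↗(ℕ), both the set {χ ∈ I∞↗(ℕ) : α * χ = β} and the set {χ ∈ I∞↗(ℕ) : χ * α = β} are finite. Consequently, every left translation and every right translation by an element of I∞↗(ℕ) is a finite-to-one map. -/
open Set

/-- Cofinite monotone partial bijections of `ℕ`. -/
def IsCMPB (e : PartialEquiv ℕ ℕ) : Prop :=
  e.sourceᶜ.Finite ∧ e.targetᶜ.Finite ∧
    ∀ ⦃m n : ℕ⦄, m ∈ e.source → n ∈ e.source → m < n → e m < e n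

lemma IsCMPB.symm {e : PartialEquiv ℕ ℕ} (he : IsCMPB e) : IsCMPB e.symm := by
  obtain ⟨h1, h2, h3⟩ := he
  refine ⟨by simpa using h2, by simpa using h1, ?_⟩
  intro m n hm hn hmn
  have hm' : e.symm m ∈ e.source := e.map_target (by simpa using hm)
  have hn' : e.symm n ∈ e.source := e.map_target (by simpa using hn)
  have hEm : e (e.symm m) = m := e.right_inv hm
  have hEn : e (e.symm n) = n := e.right_inv hn
  rcases lt_trichotomy (e.symm m) (e.symm n) with h | h | h
  · exact h
  · exfalso
    have : m = n := by rw [← hEm, ← hEn, h]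
    omega
  · exfalso
    have := h3 hn' hm' h
    rw [hEm, hEn] at this
    omega

private lemma trans_source_compl_finite {e f : PartialEquiv ℕ ℕ}
    (he : e.sourceᶜ.Finite) (hf : f.sourceᶜ.Finite) : ((e.trans f).source)ᶜ.Finite := by
  rw [PartialEquiv.trans_source]
  have hT : (e.source ∩ e ⁻¹' f.sourceᶜ).Finite := by
    apply Set.Finite.of_finite_image ?_ (e.injOn.mono inter_subset_left)
    apply hf.subset
    rintro _ ⟨x, ⟨_, hx2⟩, rfl⟩
    exact hx2
  apply (he.union hT).subset
  intro x hx
  simp only [mem_compl_iff, mem_inter_iff, not_and_or] at hx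
  by_cases h : x ∈ e.source
  · rcases hx with h' | h'
    · exact absurd h h'
    · exact Or.inr ⟨h, h'⟩
  · exact Or.inl h

lemma IsCMPB.trans {e f : PartialEquiv ℕ ℕ} (he : IsCMPB e) (hf : IsCMPB f) :
    IsCMPB (e.trans f) := by
  refine ⟨trans_source_compl_finite he.1 hf.1, ?_, ?_⟩
  · have h : (((e.trans f).symm).source)ᶜ.Finite := by
      rw [PartialEquiv.trans_symm_eq_symm_trans_symm]
      exact trans_source_compl_finite (by simpa using hf.2.1) (by simpa using he.2.1)
    simpa using h
  · intro m n hm hn hmn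
    rw [PartialEquiv.trans_source] at hm hn
    show f (e m) < f (e n)
    exact hf.2.2 hm.2 hn.2 (he.2.2 hm.1 hn.1 hmn)

lemma isCMPB_congr {e e' : PartialEquiv ℕ ℕ} (h : e ≈ e') : IsCMPB e ↔ IsCMPB e' := by
  constructor <;> intro ⟨h1, h2, h3⟩
  · refine ⟨(PartialEquiv.EqOnSource.source_eq h) ▸ h1, (PartialEquiv.EqOnSource.target_eq h) ▸ h2, ?_⟩
    intro m n hm hn hmn
    rw [← (PartialEquiv.EqOnSource.source_eq h)] at hm hn
    rw [← (PartialEquiv.EqOnSource.eqOn h) hm, ← (PartialEquiv.EqOnSource.eqOn h) hn]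
    exact h3 hm hn hmn
  · refine ⟨(PartialEquiv.EqOnSource.source_eq h) ▸ h1, (PartialEquiv.EqOnSource.target_eq h) ▸ h2, ?_⟩
    intro m n hm hn hmn
    rw [(PartialEquiv.EqOnSource.eqOn h) hm, (PartialEquiv.EqOnSource.eqOn h) hn]
    exact h3 ((PartialEquiv.EqOnSource.source_eq h) ▸ hm) ((PartialEquiv.EqOnSource.source_eq h) ▸ hn) hmn

/-- The type of partial bijections of `ℕ` up to equality on the source. -/
abbrev PEQ : Type := Quotient (PartialEquiv.eqOnSourceSetoid (α := ℕ) (β := ℕ))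

instance : Mul PEQ :=
  ⟨Quotient.map₂ PartialEquiv.trans fun _ _ h _ _ h' => PartialEquiv.EqOnSource.trans' h h'⟩

lemma PEQ.mk_mul (e f : PartialEquiv ℕ ℕ) : (⟦e⟧ * ⟦f⟧ : PEQ) = ⟦e.trans f⟧ := rfl

instance : Semigroup PEQ where
  mul_assoc a b c := by
    induction a using Quotient.inductionOn with | h a =>
    induction b using Quotient.inductionOn with | h b =>
    induction c using Quotient.inductionOn with | h c =>
    simp only [PEQ.mk_mul, PartialEquiv.trans_assoc]

/-- The property of being a cofinite monotone partial bijection, on `PEQ`. -/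
def PEQ.IsGood : PEQ → Prop :=
  Quotient.lift IsCMPB fun _ _ h => propext (isCMPB_congr h)

lemma PEQ.IsGood.mul {a b : PEQ} (ha : a.IsGood) (hb : b.IsGood) : (a * b).IsGood := by
  induction a using Quotient.inductionOn with | h a =>
  induction b using Quotient.inductionOn with | h b =>
  exact IsCMPB.trans ha hb

/-- The semigroup `I∞↗(ℕ)` of cofinite monotone partial bijections of `ℕ`
(partial bijections being identified when they have the same source and coincide there). -/
def Imon : Type := {q : PEQ // q.IsGood}

instance : Mul Imon := ⟨fun a b => ⟨a.1 * b.1, a.2.mul b.2⟩⟩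

instance : Semigroup Imon where
  mul_assoc a b c := Subtype.ext (mul_assoc a.1 b.1 c.1)

/-- The underlying symmetrization (inverse partial bijection), on `PEQ`. -/
def PEQ.symm : PEQ → PEQ := Quotient.map PartialEquiv.symm fun _ _ h => PartialEquiv.EqOnSource.symm' h

lemma PEQ.IsGood.symm {a : PEQ} (ha : a.IsGood) : a.symm.IsGood := by
  induction a using Quotient.inductionOn with | h a =>
  exact IsCMPB.symm ha

/-- The inverse in the inverse semigroup `I∞↗(ℕ)`. -/
instance : Inv Imon := ⟨fun a => ⟨a.1.symm, a.2.symm⟩⟩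

/-- The source (domain) of an element of `PEQ`. -/
def PEQ.source : PEQ → Set ℕ :=
  Quotient.lift (fun e => e.source) fun _ _ h => (PartialEquiv.EqOnSource.source_eq h)

/-- The target (range) of an element of `PEQ`. -/
def PEQ.target : PEQ → Set ℕ :=
  Quotient.lift (fun e => e.target) fun _ _ h => (PartialEquiv.EqOnSource.target_eq h)

/-- The source (domain) of a cofinite monotone partial bijection of `ℕ`. -/
def Imon.source (a : Imon) : Set ℕ := a.1.source

/-- The target (range) of a cofinite monotone partial bijection of `ℕ`. -/
def Imon.target (a : Imon) : Set ℕ := a.1.target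

/-- The graph of an element of `PEQ`: pairs `(x, y)` with `x` in the source mapped to `y`. -/
def PEQ.graph : PEQ → Set (ℕ × ℕ) :=
  Quotient.lift (fun e => {p : ℕ × ℕ | p.1 ∈ e.source ∧ e p.1 = p.2}) fun e e' h => by
    ext p
    simp only [mem_setOf_eq]
    constructor
    · rintro ⟨h1, h2⟩
      exact ⟨(PartialEquiv.EqOnSource.source_eq h) ▸ h1, by rw [← (PartialEquiv.EqOnSource.eqOn h) h1]; exact h2⟩
    · rintro ⟨h1, h2⟩
      refine ⟨(PartialEquiv.EqOnSource.source_eq h) ▸ h1, ?_⟩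
      rw [(PartialEquiv.EqOnSource.eqOn h) ((PartialEquiv.EqOnSource.source_eq h) ▸ h1 : p.1 ∈ e.source)]
      exact h2

/-- The graph of a cofinite monotone partial bijection of `ℕ`. -/
def Imon.graph (a : Imon) : Set (ℕ × ℕ) := a.1.graph

/-- The natural partial order on idempotents: `ε ≤ ι` iff `ε * ι = ι * ε = ε`. -/
def idemLE (ε ι : Imon) : Prop := ε * ι = ε ∧ ι * ε = ε

/-- The everywhere-defined partial bijection `n ↦ n + 1`. -/
def alphaPE : PartialEquiv ℕ ℕ where
  toFun n := n + 1
  invFun n := n - 1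
  source := Set.univ
  target := {n : ℕ | 1 ≤ n}
  map_source' n _ := Nat.le_add_left 1 n
  map_target' _ _ := trivial
  left_inv' n _ := by show n + 1 - 1 = n; omega
  right_inv' n hn := by
    simp only [Set.mem_setOf_eq] at hn
    show n - 1 + 1 = n
    omega

lemma alphaPE_good : IsCMPB alphaPE := by
  refine ⟨by simp [alphaPE], ?_, ?_⟩
  · apply (Set.finite_singleton 0).subset
    intro n hn
    simp only [alphaPE, mem_compl_iff, mem_setOf_eq, not_le] at hn
    simp only [mem_singleton_iff]
    omega
  · intro m n _ _ h
    show m + 1 < n + 1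
    omega

/-- The generator `α : n ↦ n + 1` of the bicyclic subsemigroup. -/
def aGen : Imon := ⟨⟦alphaPE⟧, alphaPE_good⟩

/-- The generator `β : n ↦ n - 1` (with source `{n | 1 ≤ n}`) of the bicyclic subsemigroup. -/
def bGen : Imon := aGen⁻¹

/-- The bicyclic subsemigroup `C_ℕ(α, β)` of `I∞↗(ℕ)`, generated by `α` and `β`. -/
def Cbic : Subsemigroup Imon := Subsemigroup.closure {aGen, bGen}


lemma PEQ.symm_mul (p q : PEQ) : (p * q).symm = q.symm * p.symm := by
  induction p using Quotient.inductionOn with | h e =>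
  induction q using Quotient.inductionOn with | h f =>
  show (⟦(e.trans f).symm⟧ : PEQ) = ⟦f.symm.trans e.symm⟧
  rw [PartialEquiv.trans_symm_eq_symm_trans_symm]

lemma PEQ.symm_symm (p : PEQ) : p.symm.symm = p := by
  induction p using Quotient.inductionOn with | h e =>
  show (⟦e.symm.symm⟧ : PEQ) = ⟦e⟧
  rw [PartialEquiv.symm_symm]

lemma Imon.inv_mul_rev (x y : Imon) : (x * y)⁻¹ = y⁻¹ * x⁻¹ :=
  Subtype.ext (PEQ.symm_mul x.1 y.1)

lemma Imon.inv_inv (x : Imon) : x⁻¹⁻¹ = x :=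
  Subtype.ext (PEQ.symm_symm x.1)

lemma Imon.left_translation_finite (α β : Imon) : {χ : Imon | α * χ = β}.Finite := by
  obtain ⟨a, ha⟩ := Quotient.exists_rep α.1
  obtain ⟨b, hb⟩ := Quotient.exists_rep β.1
  have hA : IsCMPB a := by
    have : PEQ.IsGood ⟦a⟧ := ha ▸ α.2
    exact this
  have hB : IsCMPB b := by
    have : PEQ.IsGood ⟦b⟧ := hb ▸ β.2
    exact this
  -- the finite complement of the target of `a`
  set K : Set ℕ := a.targetᶜ with hKdef
  have hK : K.Finite := hA.2.1
  obtain ⟨N, hN⟩ := hK.bddAbove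
  -- pick a point `z = a x₀`, `x₀ ∈ b.source ∩ a.source`, with `z` above all of `K`
  have hT : (⇑a '' (b.source ∩ a.source)).Infinite := by
    apply Set.infinite_of_finite_compl
    apply (hA.2.1.union ((hB.1.subset (Set.diff_subset_compl a.source b.source)).image ⇑a)).subset
    intro y hy
    by_cases hyt : y ∈ a.target
    · right
      refine ⟨a.symm y, ⟨a.map_target hyt, ?_⟩, a.right_inv hyt⟩
      intro hys
      exact hy ⟨a.symm y, ⟨hys, a.map_target hyt⟩, a.right_inv hyt⟩
    · exact Or.inl hyt
  obtain ⟨z, hzT, hzN⟩ := hT.exists_gt N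
  obtain ⟨x₀, ⟨hx₀b, hx₀a⟩, hx₀z⟩ := hzT
  set B : ℕ := b x₀ + 1 with hBdef
  -- key facts about any solution
  have main : ∀ e : PartialEquiv ℕ ℕ, IsCMPB e → (⟦a.trans e⟧ : PEQ) = ⟦b⟧ →
      (∀ x, x ∈ b.source ↔ x ∈ a.source ∧ a x ∈ e.source) ∧
      (∀ x ∈ b.source, e (a x) = b x) ∧
      (∀ y ∈ e.source, y ∈ K → e y < B) := by
    intro e he hmul
    have h : a.trans e ≈ b := Quotient.exact hmul
    have hsrc : a.source ∩ ⇑a ⁻¹' e.source = b.source := by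
      have := h.1
      rwa [PartialEquiv.trans_source] at this
    have heq : ∀ x ∈ b.source, e (a x) = b x := by
      intro x hx
      have hx' : x ∈ (a.trans e).source := by rw [h.1]; exact hx
      have := h.2 hx'
      simpa using this
    have hiff : ∀ x, x ∈ b.source ↔ x ∈ a.source ∧ a x ∈ e.source := by
      intro x
      rw [← hsrc]
      simp [Set.mem_inter_iff]
    refine ⟨hiff, heq, ?_⟩
    intro y hy hyK
    have hzs : a x₀ ∈ e.source := ((hiff x₀).1 hx₀b).2
    have hyz : y < a x₀ := by
      have : y ≤ N := hN hyK
      omega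
    have := he.2.2 hy hzs hyz
    have hez : e (a x₀) = b x₀ := heq x₀ hx₀b
    omega
  -- the window map
  set F : Imon → Set (ℕ × ℕ) := fun χ => χ.graph ∩ (K ×ˢ Set.Iio B) with hFdef
  apply Set.Finite.of_finite_image (f := F)
  · apply ((hK.prod (Set.finite_Iio B)).finite_subsets).subset
    rintro _ ⟨χ, _, rfl⟩
    exact Set.inter_subset_right
  · -- injectivity on the solution set
    intro χ hχ χ' hχ' hFF
    obtain ⟨e, he1⟩ := Quotient.exists_rep χ.1
    obtain ⟨e', he1'⟩ := Quotient.exists_rep χ'.1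
    have hce : IsCMPB e := by
      have : PEQ.IsGood ⟦e⟧ := he1 ▸ χ.2
      exact this
    have hce' : IsCMPB e' := by
      have : PEQ.IsGood ⟦e'⟧ := he1' ▸ χ'.2
      exact this
    have hmul : (⟦a.trans e⟧ : PEQ) = ⟦b⟧ := by
      have : α.1 * χ.1 = β.1 := congrArg Subtype.val hχ
      rw [← ha, ← hb, ← he1] at this
      exact this
    have hmul' : (⟦a.trans e'⟧ : PEQ) = ⟦b⟧ := by
      have : α.1 * χ'.1 = β.1 := congrArg Subtype.val hχ'
      rw [← ha, ← hb, ← he1'] at this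
      exact this
    obtain ⟨hi, hv, hw⟩ := main e hce hmul
    obtain ⟨hi', hv', hw'⟩ := main e' hce' hmul'
    have hgr : F χ = {p : ℕ × ℕ | p.1 ∈ e.source ∧ e p.1 = p.2} ∩ (K ×ˢ Set.Iio B) := by
      rw [hFdef]
      show χ.1.graph ∩ _ = _
      rw [← he1]
      rfl
    have hgr' : F χ' = {p : ℕ × ℕ | p.1 ∈ e'.source ∧ e' p.1 = p.2} ∩ (K ×ˢ Set.Iio B) := by
      rw [hFdef]
      show χ'.1.graph ∩ _ = _
      rw [← he1']
      rfl
    rw [hgr, hgr'] at hFF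
    -- symmetric step
    have step : ∀ (f f' : PartialEquiv ℕ ℕ),
        (∀ x, x ∈ b.source ↔ x ∈ a.source ∧ a x ∈ f.source) →
        (∀ x ∈ b.source, f (a x) = b x) →
        (∀ y ∈ f.source, y ∈ K → f y < B) →
        (∀ x, x ∈ b.source ↔ x ∈ a.source ∧ a x ∈ f'.source) →
        (∀ x ∈ b.source, f' (a x) = b x) →
        ({p : ℕ × ℕ | p.1 ∈ f.source ∧ f p.1 = p.2} ∩ (K ×ˢ Set.Iio B)
          = {p : ℕ × ℕ | p.1 ∈ f'.source ∧ f' p.1 = p.2} ∩ (K ×ˢ Set.Iio B)) →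
        ∀ y ∈ f.source, y ∈ f'.source ∧ f y = f' y := by
      intro f f' hi hv hw hi' hv' hff y hy
      by_cases hyt : y ∈ a.target
      · set x := a.symm y with hx
        have hxa : x ∈ a.source := a.map_target hyt
        have hax : a x = y := a.right_inv hyt
        have hxb : x ∈ b.source := (hi x).2 ⟨hxa, hax ▸ hy⟩
        have h1 : a x ∈ f'.source := ((hi' x).1 hxb).2
        refine ⟨hax ▸ h1, ?_⟩
        rw [← hax, hv x hxb, hv' x hxb]
      · have hyK : y ∈ K := hyt
        have hfy : f y < B := hw y hy hyK
        have hmem : (y, f y) ∈ {p : ℕ × ℕ | p.1 ∈ f.source ∧ f p.1 = p.2} ∩ (K ×ˢ Set.Iio B) :=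
          ⟨⟨hy, rfl⟩, hyK, hfy⟩
        rw [hff] at hmem
        exact ⟨hmem.1.1, hmem.1.2.symm⟩
    have hee' : e ≈ e' := by
      have hfwd := step e e' hi hv hw hi' hv' hFF
      have hbwd := step e' e hi' hv' hw' hi hv hFF.symm
      constructor
      · ext y
        exact ⟨fun h => (hfwd y h).1, fun h => (hbwd y h).1⟩
      · intro y hy
        exact (hfwd y hy).2
    apply Subtype.ext
    rw [← he1, ← he1']
    exact Quotient.sound hee'

/-- for all `α β` in `I∞↗(ℕ)`, the solution sets `{χ | α * χ = β}` and
`{χ | χ * α = β}` are finite; hence all translations are finite-to-one. -/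
theorem Imon_translations_finite_to_one (α β : Imon) :
    {χ : Imon | α * χ = β}.Finite ∧ {χ : Imon | χ * α = β}.Finite := by
  refine ⟨Imon.left_translation_finite α β, ?_⟩
  apply Set.Finite.subset ((Imon.left_translation_finite α⁻¹ β⁻¹).image (·⁻¹))
  intro χ hχ
  refine ⟨χ⁻¹, ?_, Imon.inv_inv χ⟩
  show α⁻¹ * χ⁻¹ = β⁻¹
  rw [← Imon.inv_mul_rev, hχ]
end

section
/- Let S be a semigroup and h : I∞↗(ℕ) → S a semigroup homomorphism such that h(ε) = h(φ) for some two distinct idempotents ε, φ of I∞↗(ℕ). Then h(ε) = h(ψ) for every idempotent ψ of I∞↗(ℕ), i.e., h is constant on the idempotents. -/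
open Set

/-! ### Auxiliary machinery for statement 12 -/

/-- The partial equiv associated to a strictly monotone map `f : ℕ → ℕ` (full source). -/
noncomputable def msPE (f : ℕ → ℕ) (hf : StrictMono f) : PartialEquiv ℕ ℕ where
  toFun := f
  invFun := Function.invFun f
  source := Set.univ
  target := Set.range f
  map_source' x _ := Set.mem_range_self x
  map_target' _ _ := trivial
  left_inv' x _ := Function.leftInverse_invFun hf.injective x
  right_inv' _ hy := Function.invFun_eq hy

lemma msPE_good (f : ℕ → ℕ) (hf : StrictMono f) (hr : (Set.range f)ᶜ.Finite) :
    IsCMPB (msPE f hf) :=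
  ⟨by simp [msPE], by simpa [msPE] using hr, fun m n _ _ h => hf h⟩

/-- The element of `Imon` associated to a strictly monotone map with cofinite range. -/
noncomputable def msIm (f : ℕ → ℕ) (hf : StrictMono f) (hr : (Set.range f)ᶜ.Finite) : Imon :=
  ⟨⟦msPE f hf⟧, msPE_good f hf hr⟩

lemma ofSet_good (C : Set ℕ) (hC : Cᶜ.Finite) : IsCMPB (PartialEquiv.ofSet C) :=
  ⟨by simpa using hC, by simpa using hC, fun m n _ _ h => h⟩

/-- The idempotent of `Imon` given by the identity on a cofinite set. -/
def idIm (C : Set ℕ) (hC : Cᶜ.Finite) : Imon := ⟨⟦PartialEquiv.ofSet C⟧, ofSet_good C hC⟩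

lemma idIm_congr {C D : Set ℕ} (hC : Cᶜ.Finite) (hD : Dᶜ.Finite) (h : C = D) :
    idIm C hC = idIm D hD := by subst h; rfl

lemma inter_compl_finite {C D : Set ℕ} (hC : Cᶜ.Finite) (hD : Dᶜ.Finite) :
    (C ∩ D)ᶜ.Finite := by rw [Set.compl_inter]; exact hC.union hD

lemma idIm_mul (C D : Set ℕ) (hC : Cᶜ.Finite) (hD : Dᶜ.Finite) :
    idIm C hC * idIm D hD = idIm (C ∩ D) (inter_compl_finite hC hD) := by
  apply Subtype.ext
  show (⟦(PartialEquiv.ofSet C).trans (PartialEquiv.ofSet D)⟧ : PEQ) = ⟦PartialEquiv.ofSet (C ∩ D)⟧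
  refine Quotient.sound ⟨?_, fun x _ => rfl⟩
  simp [PartialEquiv.trans_source]

lemma preimage_compl_finite {f : ℕ → ℕ} (hf : StrictMono f) {C : Set ℕ} (hC : Cᶜ.Finite) :
    (f ⁻¹' C)ᶜ.Finite := by
  rw [← Set.preimage_compl]
  exact hC.preimage (hf.injective.injOn)

lemma image_compl_finite {f : ℕ → ℕ} (hr : (Set.range f)ᶜ.Finite) {C : Set ℕ} (hC : Cᶜ.Finite) :
    (f '' C)ᶜ.Finite := by
  apply (hr.union (hC.image f)).subset
  intro y hy
  by_cases hyr : y ∈ Set.range f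
  · obtain ⟨x, rfl⟩ := hyr
    right
    exact ⟨x, fun hx => hy ⟨x, hx, rfl⟩, rfl⟩
  · exact Or.inl hyr

/-- Conjugation `g ∘ id_C ∘ g⁻¹` gives the identity on the preimage. -/
lemma conj_preimage (f : ℕ → ℕ) (hf : StrictMono f) (hr : (Set.range f)ᶜ.Finite)
    (C : Set ℕ) (hC : Cᶜ.Finite) :
    msIm f hf hr * idIm C hC * (msIm f hf hr)⁻¹
      = idIm (f ⁻¹' C) (preimage_compl_finite hf hC) := by
  apply Subtype.ext
  show (⟦((msPE f hf).trans (PartialEquiv.ofSet C)).trans (msPE f hf).symm⟧ : PEQ)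
      = ⟦PartialEquiv.ofSet (f ⁻¹' C)⟧
  refine Quotient.sound ⟨?_, fun x _ => Function.leftInverse_invFun hf.injective x⟩
  ext x
  simp [PartialEquiv.trans_source, msPE]

/-- Conjugation `g⁻¹ ∘ id_C ∘ g` gives the identity on the image. -/
lemma conj_image (f : ℕ → ℕ) (hf : StrictMono f) (hr : (Set.range f)ᶜ.Finite)
    (C : Set ℕ) (hC : Cᶜ.Finite) :
    (msIm f hf hr)⁻¹ * idIm C hC * msIm f hf hr
      = idIm (f '' C) (image_compl_finite hr hC) := by
  apply Subtype.ext
  show (⟦((msPE f hf).symm.trans (PartialEquiv.ofSet C)).trans (msPE f hf)⟧ : PEQ)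
      = ⟦PartialEquiv.ofSet (f '' C)⟧
  refine Quotient.sound ⟨?_, ?_⟩
  · ext y
    simp only [PartialEquiv.trans_source, PartialEquiv.ofSet_source, PartialEquiv.symm_source,
      Set.mem_inter_iff, Set.mem_preimage]
    constructor
    · rintro ⟨⟨hyr, hx⟩, -⟩
      obtain ⟨x, rfl⟩ : y ∈ Set.range f := hyr
      rw [show ((msPE f hf).symm : ℕ → ℕ) (f x) = Function.invFun f (f x) from rfl,
        Function.leftInverse_invFun hf.injective x] at hx
      exact ⟨x, hx, rfl⟩
    · rintro ⟨x, hx, rfl⟩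
      refine ⟨⟨⟨x, rfl⟩, ?_⟩, trivial⟩
      rw [show ((msPE f hf).symm : ℕ → ℕ) (f x) = Function.invFun f (f x) from rfl,
        Function.leftInverse_invFun hf.injective x]
      exact hx
  · intro y hy
    rw [PartialEquiv.trans_source, PartialEquiv.trans_source] at hy
    obtain ⟨⟨hy1, -⟩, -⟩ := hy
    exact Function.invFun_eq hy1

/-- Every idempotent of `Imon` is the identity of a cofinite set. -/
lemma idem_eq_idIm (ψ : Imon) (hψ : ψ * ψ = ψ) :
    ∃ (C : Set ℕ) (hC : Cᶜ.Finite), ψ = idIm C hC := by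
  obtain ⟨q, hgood⟩ := ψ
  revert hψ
  revert hgood
  induction q using Quotient.inductionOn with | h e =>
  intro hgood hψ
  have hval : (⟦e.trans e⟧ : PEQ) = ⟦e⟧ := congrArg Subtype.val hψ
  have hequiv : e.trans e ≈ e := Quotient.exact hval
  obtain ⟨hsrc, heqon⟩ := hequiv
  have hfix : ∀ x ∈ e.source, e x = x := by
    intro x hx
    have hx' : x ∈ (e.trans e).source := hsrc ▸ hx
    have hmem : e x ∈ e.source := by
      rw [PartialEquiv.trans_source] at hx'
      exact hx'.2
    have : e (e x) = e x := heqon hx'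
    exact e.injOn hmem hx this
  have hCfin : e.sourceᶜ.Finite := hgood.1
  refine ⟨e.source, hCfin, ?_⟩
  apply Subtype.ext
  exact Quotient.sound ⟨rfl, fun x hx => hfix x hx⟩

/-- Construction of a monotone map witnessing the removal of a point. -/
lemma exists_pointing_map (A : Set ℕ) (hA : Aᶜ.Finite) (n : ℕ) (hn : n ∈ A) :
    ∃ (f : ℕ → ℕ) (hf : StrictMono f), (Set.range f)ᶜ.Finite ∧
      f ⁻¹' A = Set.univ ∧ f ⁻¹' (A \ {n}) = {i : ℕ | i ≠ 0} := by
  set p : ℕ → Prop := fun m => m = n ∨ (m ∈ A ∧ n < m) with hp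
  have hinf : (setOf p).Infinite := by
    apply ((hA.union (Set.finite_Iic n)).infinite_compl).mono
    intro m hm
    simp only [Set.mem_compl_iff, Set.mem_union, Set.mem_Iic, not_or, not_le] at hm
    exact Or.inr ⟨not_not.mp hm.1, hm.2⟩
  refine ⟨Nat.nth p, Nat.nth_strictMono hinf, ?_, ?_, ?_⟩
  · rw [Nat.range_nth_of_infinite hinf]
    apply (hA.union (Set.finite_Iic n)).subset
    intro m hm
    simp only [Set.mem_compl_iff, Set.mem_setOf_eq, hp, not_or, not_and, not_lt] at hm
    by_cases hmA : m ∈ A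
    · right
      exact hm.2 hmA
    · exact Or.inl hmA
  · ext i
    simp only [Set.mem_preimage, Set.mem_univ, iff_true]
    rcases Nat.nth_mem_of_infinite hinf i with h | h
    · rw [h]; exact hn
    · exact h.1
  · have h0 : Nat.nth p 0 = n := by
      rw [Nat.nth_zero]
      apply IsLeast.csInf_eq
      constructor
      · exact Or.inl rfl
      · intro m hm
        rcases hm with rfl | hm
        · exact le_refl _
        · exact le_of_lt hm.2
    ext i
    simp only [Set.mem_preimage, Set.mem_diff, Set.mem_singleton_iff, Set.mem_setOf_eq]
    constructor
    · rintro ⟨-, hne⟩ rfl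
      exact hne h0
    · intro hi
      have hAi : Nat.nth p i ∈ A := by
        rcases Nat.nth_mem_of_infinite hinf i with h | h
        · rw [h]; exact hn
        · exact h.1
      refine ⟨hAi, fun hni => ?_⟩
      exact hi ((Nat.nth_strictMono hinf).injective (hni.trans h0.symm))

lemma univ_compl_finite : (Set.univ : Set ℕ)ᶜ.Finite := by simp

lemma succ_strictMono : StrictMono (fun m : ℕ => m + 1) := fun a b hab => by show a + 1 < b + 1; omega

lemma succ_range_compl_finite : (Set.range (fun m : ℕ => m + 1))ᶜ.Finite := by
  apply (Set.finite_singleton 0).subset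
  intro m hm
  simp only [Set.mem_compl_iff, Set.mem_range] at hm
  simp only [Set.mem_singleton_iff]
  by_contra h
  exact hm ⟨m - 1, by omega⟩

lemma ge_compl_finite (j : ℕ) : ({m : ℕ | j ≤ m})ᶜ.Finite := by
  apply (Set.finite_Iio j).subset
  intro m hm
  simpa [Set.mem_Iio, not_le] using hm

/-- Key reduction: if `h` identifies `id_A` with `id_{A'}` for `A' ⊆ A \ {n}` with `n ∈ A`,
then `h` sends every cofinite identity to `h (id_univ)`. -/
lemma key_univ {S : Type*} [Semigroup S] (h : Imon → S)
    (hhom : ∀ x y : Imon, h (x * y) = h x * h y)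
    (A : Set ℕ) (hA : Aᶜ.Finite) (A' : Set ℕ) (hA' : A'ᶜ.Finite)
    (hsub : A' ⊆ A) (n : ℕ) (hnA : n ∈ A) (hnA' : n ∉ A')
    (heq : h (idIm A hA) = h (idIm A' hA')) :
    ∀ (C : Set ℕ) (hC : Cᶜ.Finite), h (idIm C hC) = h (idIm Set.univ univ_compl_finite) := by
  -- Step a: h (id_A) = h (id_{A \ {n}})
  have hAn : (A \ {n})ᶜ.Finite := by
    rw [Set.diff_eq]
    exact inter_compl_finite hA (by simp)
  have stepa : h (idIm A hA) = h (idIm (A \ {n}) hAn) := by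
    have e1 : idIm (A \ {n}) hAn * idIm A hA = idIm (A \ {n}) hAn := by
      rw [idIm_mul]
      exact idIm_congr _ _ (by rw [Set.inter_eq_left]; exact Set.diff_subset)
    have e2 : idIm (A \ {n}) hAn * idIm A' hA' = idIm A' hA' := by
      rw [idIm_mul]
      apply idIm_congr
      rw [Set.inter_eq_right]
      intro x hx
      exact ⟨hsub hx, fun hxn => hnA' (hxn ▸ hx)⟩
    have main : h (idIm (A \ {n}) hAn) = h (idIm A hA) :=
      calc h (idIm (A \ {n}) hAn) = h (idIm (A \ {n}) hAn * idIm A hA) := by rw [e1]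
      _ = h (idIm (A \ {n}) hAn) * h (idIm A hA) := hhom _ _
      _ = h (idIm (A \ {n}) hAn) * h (idIm A' hA') := by rw [heq]
      _ = h (idIm (A \ {n}) hAn * idIm A' hA') := (hhom _ _).symm
      _ = h (idIm A' hA') := by rw [e2]
      _ = h (idIm A hA) := heq.symm
    exact main.symm
  -- Step b: conjugate to get h (id_univ) = h (id_{≥1})
  obtain ⟨f, hf, hr, hfA, hfAn⟩ := exists_pointing_map A hA n hnA
  have stepb : h (idIm Set.univ univ_compl_finite) = h (idIm {i : ℕ | i ≠ 0}
      (by apply (Set.finite_singleton 0).subset; intro m hm; simpa using hm)) := by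
    have c1 := conj_preimage f hf hr A hA
    have c2 := conj_preimage f hf hr (A \ {n}) hAn
    have expand : ∀ (x : Imon), h (msIm f hf hr * x * (msIm f hf hr)⁻¹)
        = h (msIm f hf hr) * h x * h (msIm f hf hr)⁻¹ := by
      intro x
      rw [hhom, hhom]
    calc h (idIm Set.univ univ_compl_finite)
        = h (idIm (f ⁻¹' A) (preimage_compl_finite hf hA)) := by
          exact congrArg h (idIm_congr _ _ hfA.symm)
      _ = h (msIm f hf hr * idIm A hA * (msIm f hf hr)⁻¹) := by rw [c1]
      _ = h (msIm f hf hr) * h (idIm A hA) * h (msIm f hf hr)⁻¹ := expand _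
      _ = h (msIm f hf hr) * h (idIm (A \ {n}) hAn) * h (msIm f hf hr)⁻¹ := by rw [stepa]
      _ = h (msIm f hf hr * idIm (A \ {n}) hAn * (msIm f hf hr)⁻¹) := (expand _).symm
      _ = h (idIm (f ⁻¹' (A \ {n})) (preimage_compl_finite hf hAn)) := by rw [c2]
      _ = _ := congrArg h (idIm_congr _ _ hfAn)
  have base : h (idIm Set.univ univ_compl_finite) = h (idIm {m : ℕ | 1 ≤ m} (ge_compl_finite 1)) := by
    rw [stepb]
    exact congrArg h (idIm_congr _ _ (by ext m; simp; omega))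
  -- Step c: h (id_univ) = h (id_{≥j}) for all j
  have stepc : ∀ j : ℕ, h (idIm Set.univ univ_compl_finite) = h (idIm {m : ℕ | j ≤ m} (ge_compl_finite j)) := by
    intro j
    induction j with
    | zero => exact congrArg h (idIm_congr _ _ (by ext m; simp))
    | succ j ih =>
      set G := msIm (fun m : ℕ => m + 1) succ_strictMono succ_range_compl_finite with hG
      have expand : ∀ (x : Imon), h (G⁻¹ * x * G) = h G⁻¹ * h x * h G := by
        intro x
        rw [hhom, hhom]
      have c1 := conj_image (fun m : ℕ => m + 1) succ_strictMono succ_range_compl_finite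
        Set.univ univ_compl_finite
      have c2 := conj_image (fun m : ℕ => m + 1) succ_strictMono succ_range_compl_finite
        {m : ℕ | j ≤ m} (ge_compl_finite j)
      have im1 : (fun m : ℕ => m + 1) '' Set.univ = {m : ℕ | 1 ≤ m} := by
        ext m
        simp only [Set.image_univ, Set.mem_range, Set.mem_setOf_eq]
        constructor
        · rintro ⟨x, rfl⟩; omega
        · intro hm; exact ⟨m - 1, by omega⟩
      have im2 : (fun m : ℕ => m + 1) '' {m : ℕ | j ≤ m} = {m : ℕ | j + 1 ≤ m} := by
        ext m
        simp only [Set.mem_image, Set.mem_setOf_eq]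
        constructor
        · rintro ⟨x, hx, rfl⟩; omega
        · intro hm; exact ⟨m - 1, by omega, by omega⟩
      calc h (idIm Set.univ univ_compl_finite)
          = h (idIm {m : ℕ | 1 ≤ m} (ge_compl_finite 1)) := base
        _ = h (idIm ((fun m : ℕ => m + 1) '' Set.univ)
              (image_compl_finite succ_range_compl_finite univ_compl_finite)) :=
            congrArg h (idIm_congr _ _ im1.symm)
        _ = h (G⁻¹ * idIm Set.univ univ_compl_finite * G) := by rw [c1]
        _ = h G⁻¹ * h (idIm Set.univ univ_compl_finite) * h G := expand _
        _ = h G⁻¹ * h (idIm {m : ℕ | j ≤ m} (ge_compl_finite j)) * h G := by rw [ih]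
        _ = h (G⁻¹ * idIm {m : ℕ | j ≤ m} (ge_compl_finite j) * G) := (expand _).symm
        _ = h (idIm ((fun m : ℕ => m + 1) '' {m : ℕ | j ≤ m})
              (image_compl_finite succ_range_compl_finite (ge_compl_finite j))) := by rw [c2]
        _ = h (idIm {m : ℕ | j + 1 ≤ m} (ge_compl_finite (j + 1))) :=
            congrArg h (idIm_congr _ _ im2)
  -- Step d: arbitrary cofinite C
  intro C hC
  obtain ⟨N, hN⟩ : ∃ N : ℕ, ∀ m, N ≤ m → m ∈ C := by
    obtain ⟨N, hN⟩ := hC.bddAbove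
    refine ⟨N + 1, fun m hm => ?_⟩
    by_contra hmc
    have := hN hmc
    omega
  have e1 : idIm C hC * idIm Set.univ univ_compl_finite = idIm C hC := by
    rw [idIm_mul]
    exact idIm_congr _ _ (by simp)
  have e2 : idIm C hC * idIm {m : ℕ | N ≤ m} (ge_compl_finite N) = idIm {m : ℕ | N ≤ m} (ge_compl_finite N) := by
    rw [idIm_mul]
    apply idIm_congr
    rw [Set.inter_eq_right]
    intro m hm
    exact hN m hm
  calc h (idIm C hC) = h (idIm C hC * idIm Set.univ univ_compl_finite) := by rw [e1]
    _ = h (idIm C hC) * h (idIm Set.univ univ_compl_finite) := hhom _ _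
    _ = h (idIm C hC) * h (idIm {m : ℕ | N ≤ m} (ge_compl_finite N)) := by rw [stepc N]
    _ = h (idIm C hC * idIm {m : ℕ | N ≤ m} (ge_compl_finite N)) := (hhom _ _).symm
    _ = h (idIm {m : ℕ | N ≤ m} (ge_compl_finite N)) := by rw [e2]
    _ = h (idIm Set.univ univ_compl_finite) := (stepc N).symm

/-- a semigroup homomorphism from `I∞↗(ℕ)` which identifies two distinct
idempotents is constant on all idempotents. -/
theorem Imon_hom_identifying_idempotents {S : Type*} [Semigroup S]
    (h : Imon → S) (hhom : ∀ x y : Imon, h (x * y) = h x * h y)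
    (ε φ : Imon) (hε : ε * ε = ε) (hφ : φ * φ = φ) (hne : ε ≠ φ) (heq : h ε = h φ) :
    ∀ ψ : Imon, ψ * ψ = ψ → h ε = h ψ := by
  obtain ⟨A, hA, rfl⟩ := idem_eq_idIm ε hε
  obtain ⟨B, hB, rfl⟩ := idem_eq_idIm φ hφ
  have hABne : A ≠ B := fun hab => hne (idIm_congr _ _ hab)
  have hABfin := inter_compl_finite hA hB
  have hA2 : h (idIm (A ∩ B) hABfin) = h (idIm A hA) := by
    calc h (idIm (A ∩ B) hABfin) = h (idIm A hA * idIm B hB) := by rw [idIm_mul]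
      _ = h (idIm A hA) * h (idIm B hB) := hhom _ _
      _ = h (idIm A hA) * h (idIm A hA) := by rw [heq]
      _ = h (idIm A hA * idIm A hA) := (hhom _ _).symm
      _ = h (idIm A hA) := by rw [hε]
  have hB2 : h (idIm (A ∩ B) hABfin) = h (idIm B hB) := by
    calc h (idIm (A ∩ B) hABfin) = h (idIm A hA * idIm B hB) := by rw [idIm_mul]
      _ = h (idIm A hA) * h (idIm B hB) := hhom _ _
      _ = h (idIm B hB) * h (idIm B hB) := by rw [heq]
      _ = h (idIm B hB * idIm B hB) := (hhom _ _).symm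
      _ = h (idIm B hB) := by rw [hφ]
  have hpt : (∃ n ∈ A, n ∉ A ∩ B) ∨ (∃ n ∈ B, n ∉ A ∩ B) := by
    by_contra hcon
    push_neg at hcon
    obtain ⟨h1, h2⟩ := hcon
    apply hABne
    ext x
    exact ⟨fun hx => (h1 x hx).2, fun hx => (h2 x hx).1⟩
  have keyres : ∀ (C : Set ℕ) (hC : Cᶜ.Finite),
      h (idIm C hC) = h (idIm Set.univ univ_compl_finite) := by
    rcases hpt with ⟨n, hnA, hn'⟩ | ⟨n, hnB, hn'⟩
    · exact key_univ h hhom A hA (A ∩ B) hABfin Set.inter_subset_left n hnA hn' hA2.symm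
    · exact key_univ h hhom B hB (A ∩ B) hABfin Set.inter_subset_right n hnB hn' hB2.symm
  intro ψ hψ
  obtain ⟨C, hC, rfl⟩ := idem_eq_idIm ψ hψ
  rw [keyres A hA, keyres C hC]
end

section
/- For every element γ of I∞↗(ℕ) there is a unique integer n ∈ ℤ such that γ(i) = i + n for all sufficiently large i in the source of γ; the resulting map f : I∞↗(ℕ) → ℤ is a surjective semigroup homomorphism onto the additive group of integers, i.e., f(γ * δ) = f(γ) + f(δ) for all γ, δ, and every integer is attained by f. -/
open Set

/- ### Auxiliary lemmas for Statement 13 -/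

lemma cofinite_bound {s : Set ℕ} (h : sᶜ.Finite) : ∃ N : ℕ, ∀ i, N ≤ i → i ∈ s := by
  obtain ⟨N, hN⟩ := h.bddAbove
  refine ⟨N + 1, fun i hi => ?_⟩
  by_contra hc
  have := hN (show i ∈ sᶜ from hc)
  omega

lemma IsCMPB.lower_bound {e : PartialEquiv ℕ ℕ} (he : IsCMPB e) {i : ℕ} (hi : i ∈ e.source) :
    i ≤ e i + he.1.toFinset.card := by
  classical
  have hmono : StrictMonoOn e e.source := fun m hm n hn h => he.2.2 hm hn h
  set A := (Finset.range i).filter (· ∈ e.source) with hA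
  have h1 : A.card ≤ e i := by
    have hsub : A.image e ⊆ Finset.range (e i) := by
      intro y hy
      simp only [hA, Finset.mem_image, Finset.mem_filter, Finset.mem_range] at hy
      obtain ⟨x, ⟨hx1, hx2⟩, rfl⟩ := hy
      exact Finset.mem_range.mpr (he.2.2 hx2 hi hx1)
    have hinj : Set.InjOn e A := by
      intro x hx y hy hxy
      simp only [hA, Finset.coe_filter, Finset.mem_range, Set.mem_setOf_eq] at hx hy
      exact hmono.injOn hx.2 hy.2 hxy
    calc A.card = (A.image e).card := (Finset.card_image_of_injOn hinj).symm
      _ ≤ (Finset.range (e i)).card := Finset.card_le_card hsub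
      _ = e i := Finset.card_range _
  have h2 : ((Finset.range i).filter (fun x => ¬ x ∈ e.source)).card ≤ he.1.toFinset.card := by
    apply Finset.card_le_card
    intro x hx
    simp only [Finset.mem_filter] at hx
    simpa [Set.Finite.mem_toFinset] using hx.2
  have h3 : A.card + ((Finset.range i).filter (fun x => ¬ x ∈ e.source)).card = i := by
    rw [hA, Finset.card_filter_add_card_filter_not, Finset.card_range]
  omega

lemma IsCMPB.eventual_shift {e : PartialEquiv ℕ ℕ} (he : IsCMPB e) :
    ∃ n : ℤ, ∃ N : ℕ, ∀ i, N ≤ i → i ∈ e.source → ((e i : ℕ) : ℤ) = (i : ℤ) + n := by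
  obtain ⟨N₁, hN₁⟩ := cofinite_bound he.1
  obtain ⟨N₂, hN₂⟩ := cofinite_bound he.2.1
  set c := he.1.toFinset.card with hc
  set N := N₁ + N₂ + c + 1 with hN
  have hsrc : ∀ i, N ≤ i → i ∈ e.source := fun i hi => hN₁ i (by omega)
  have hbig : ∀ i, N ≤ i → N₂ ≤ e i := by
    intro i hi
    have := he.lower_bound (hsrc i hi)
    omega
  have hstep : ∀ i, N ≤ i → e (i + 1) = e i + 1 := by
    intro i hi
    have h1 : e i < e (i + 1) := he.2.2 (hsrc i hi) (hsrc (i + 1) (by omega)) (by omega)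
    by_contra hcon
    have hy : e i + 1 ∈ e.target := hN₂ _ (by have := hbig i hi; omega)
    have hx : e.symm (e i + 1) ∈ e.source := e.map_target hy
    have hex : e (e.symm (e i + 1)) = e i + 1 := e.right_inv hy
    set x := e.symm (e i + 1) with hxdef
    have hxi : i < x := by
      rcases lt_trichotomy i x with h | h | h
      · exact h
      · rw [← h] at hex; omega
      · have := he.2.2 hx (hsrc i hi) h; omega
    have hxi2 : x < i + 1 := by
      rcases lt_trichotomy x (i + 1) with h | h | h
      · exact h
      · rw [h] at hex; omega
      · have := he.2.2 (hsrc (i + 1) (by omega)) hx h; omega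
    omega
  have hshift : ∀ k : ℕ, ((e (N + k) : ℕ) : ℤ) = (e N : ℕ) + k := by
    intro k
    induction k with
    | zero => simp
    | succ k ih =>
      have h := hstep (N + k) (by omega)
      have : N + (k + 1) = (N + k) + 1 := by ring
      rw [this, h]
      push_cast
      omega
  refine ⟨(e N : ℤ) - (N : ℤ), N, fun i hi _ => ?_⟩
  have h := hshift (i - N)
  have h' : N + (i - N) = i := by omega
  rw [h'] at h
  omega

/-- The everywhere-defined partial bijection `n ↦ n + k`. -/
def shiftPE (k : ℕ) : PartialEquiv ℕ ℕ where
  toFun n := n + k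
  invFun n := n - k
  source := Set.univ
  target := {n : ℕ | k ≤ n}
  map_source' n _ := Nat.le_add_left k n
  map_target' _ _ := trivial
  left_inv' n _ := by show n + k - k = n; omega
  right_inv' n hn := by
    simp only [Set.mem_setOf_eq] at hn
    show n - k + k = n
    omega

lemma shiftPE_good (k : ℕ) : IsCMPB (shiftPE k) := by
  refine ⟨by simp [shiftPE], ?_, ?_⟩
  · have : ({n : ℕ | k ≤ n})ᶜ = Set.Iio k := by
      ext n; simp [Set.mem_Iio]
    show ({n : ℕ | k ≤ n})ᶜ.Finite
    rw [this]
    exact Set.finite_Iio k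
  · intro m n _ _ h
    show m + k < n + k
    omega

/-- every `γ` in `I∞↗(ℕ)` eventually acts as a translation `i ↦ i + n` by a
unique integer `n`, and the resulting map `f : I∞↗(ℕ) → ℤ` is a surjective semigroup
homomorphism onto the additive group of integers. -/
theorem Imon_shift_homomorphism :
    (∀ γ : Imon, ∃! n : ℤ, ∃ N : ℕ, ∀ i j : ℕ, N ≤ i → (i, j) ∈ γ.graph →
      (j : ℤ) = (i : ℤ) + n) ∧
    ∀ f : Imon → ℤ,
      (∀ γ : Imon, ∃ N : ℕ, ∀ i j : ℕ, N ≤ i → (i, j) ∈ γ.graph →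
        (j : ℤ) = (i : ℤ) + f γ) →
      (∀ γ δ : Imon, f (γ * δ) = f γ + f δ) ∧ Function.Surjective f := by
  constructor
  · rintro ⟨q, hq⟩
    induction q using Quotient.inductionOn with | h e =>
    have he : IsCMPB e := hq
    obtain ⟨n, N, hn⟩ := he.eventual_shift
    obtain ⟨N₁, hN₁⟩ := cofinite_bound he.1
    refine ⟨n, ⟨N, fun i j hi hij => ?_⟩, ?_⟩
    · obtain ⟨h1, h2⟩ : i ∈ e.source ∧ e i = j := hij
      rw [← h2]
      exact hn i hi h1
    · rintro m ⟨M, hM⟩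
      set i := max (max N M) N₁ with hidef
      have hi : i ∈ e.source := hN₁ i (le_max_right _ _)
      have h1 := hM i (e i) (le_trans (le_max_right N M) (le_max_left _ _)) ⟨hi, rfl⟩
      have h2 := hn i (le_trans (le_max_left N M) (le_max_left _ _)) hi
      omega
  · intro f hf
    constructor
    · rintro ⟨qe, hqe⟩ ⟨qd, hqd⟩
      induction qe using Quotient.inductionOn with | h e =>
      induction qd using Quotient.inductionOn with | h d =>
      have he : IsCMPB e := hqe
      have hd : IsCMPB d := hqd
      set γ : Imon := ⟨⟦e⟧, hqe⟩ with hγ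
      set δ : Imon := ⟨⟦d⟧, hqd⟩ with hδ
      obtain ⟨Ne, hNe⟩ := hf γ
      obtain ⟨Nd, hNd⟩ := hf δ
      obtain ⟨Nm, hNm⟩ := hf (γ * δ)
      obtain ⟨N₀, hN₀⟩ := cofinite_bound (trans_source_compl_finite he.1 hd.1)
      set i := N₀ + Ne + Nm + Nd + (f γ).natAbs with hidef
      have hi : i ∈ (e.trans d).source := hN₀ i (by omega)
      have hi' := hi
      rw [PartialEquiv.trans_source] at hi'
      have h1 : ((e i : ℕ) : ℤ) = (i : ℤ) + f γ :=
        hNe i (e i) (by omega) ⟨hi'.1, rfl⟩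
      have hei : Nd ≤ e i := by omega
      have h2 : ((d (e i) : ℕ) : ℤ) = ((e i : ℕ) : ℤ) + f δ :=
        hNd (e i) (d (e i)) hei ⟨hi'.2, rfl⟩
      have h3 : ((d (e i) : ℕ) : ℤ) = (i : ℤ) + f (γ * δ) :=
        hNm i (d (e i)) (by omega) ⟨hi, rfl⟩
      omega
    · intro n
      rcases le_or_gt 0 n with h | h
      · refine ⟨⟨⟦shiftPE n.toNat⟧, shiftPE_good n.toNat⟩, ?_⟩
        set γ : Imon := ⟨⟦shiftPE n.toNat⟧, shiftPE_good n.toNat⟩ with hγ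
        obtain ⟨N, hN⟩ := hf γ
        have h1 := hN N (N + n.toNat) le_rfl ⟨trivial, rfl⟩
        omega
      · refine ⟨⟨⟦(shiftPE (-n).toNat).symm⟧, (shiftPE_good (-n).toNat).symm⟩, ?_⟩
        set k := (-n).toNat with hk
        set γ : Imon := ⟨⟦(shiftPE k).symm⟧, (shiftPE_good k).symm⟩ with hγ
        obtain ⟨N, hN⟩ := hf γ
        have hmem : N + k ∈ (shiftPE k).symm.source := by
          show k ≤ N + k
          omega
        have h1 := hN (N + k) ((shiftPE k).symm (N + k)) (by omega) ⟨hmem, rfl⟩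
        have h2 : (shiftPE k).symm (N + k) = N := by
          show N + k - k = N
          omega
        rw [h2] at h1
        omega
end
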